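/- The static transition function of a DATE over-approximates the concrete transition function: for every monitoring variable state θ ∈ Θ, ground trace t ∈ Σ* and state q ∈ Q, if Δ*((q,θ), t) = (q', θ') for some q' and θ', then q' ∈ approxΔ*({q}, t). -/

import Mathlib

open Classical

/-- A property automaton over states `Q` and alphabet `E`: a deterministic and
total transition relation is represented as a transition function. -/
structure PA (Q : Type*) (E : Type*) where
  init : Q
  bad : Set Q
  next : Q → E → Q

namespace PA

variable {Q E : Type*}

/-- Iterated application of the transition function along a ground trace. -/
def run (π : PA Q E) (q : Q) (t : List E) : Q := t.foldl π.next q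

/-- A ground trace satisfies a property automaton iff no prefix of it leads
from the initial state to a bad state. -/
def Sat (t : List E) (π : PA Q E) : Prop :=
  ∀ t' : List E, t' <+: t → π.run π.init t' ∉ π.bad

/-- Equivalence of two property automata with respect to a set of ground traces. -/
def EquivOn (T : Set (List E)) (π π' : PA Q E) : Prop :=
  ∀ t ∈ T, Sat t π ↔ Sat t π'

end PA

/-- A static program: a set of static parametrised traces over identifiers `α`,
together with a must-alias equivalence relation and a may-alias relation. -/
structure SProg (α : Type*) (E : Type*) where
  traces : Set (List (α × E))
  must : α → α → Prop
  may : α → α → Prop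
  must_equiv : Equivalence must
  must_sub_may : ∀ {x y : α}, must x y → may x y

namespace SProg

variable {α E : Type*}

-- Projection of a static parametrised trace onto an identifier `x`,
-- yielding the set of possible ground traces.
open Classical in
noncomputable def proj (P : SProg α E) (x : α) : List (α × E) → Set (List E)
  | [] => {[]}
  | (x', e) :: st =>
      if P.must x x' then (e :: ·) '' P.proj x st
      else if P.may x x' then P.proj x st ∪ (e :: ·) '' P.proj x st
      else P.proj x st

/-- The projection of a static program onto a single identifier. -/
def projId (P : SProg α E) (x : α) : Set (List E) :=
  {t | ∃ st ∈ P.traces, t ∈ P.proj x st}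

/-- The projection of a static program onto all identifiers (`P ⇓ OId`). -/
def projAll (P : SProg α E) : Set (List E) :=
  {t | ∃ st ∈ P.traces, ∃ x : α, t ∈ P.proj x st}

end SProg

/-- Satisfaction of a property automaton by a static parametrised trace:
every projection onto every identifier satisfies the automaton. -/
def PA.SSat {α Q E : Type*} (P : SProg α E) (st : List (α × E)) (π : PA Q E) : Prop :=
  ∀ x : α, ∀ t ∈ P.proj x st, PA.Sat t π

/-- Equivalence of two property automata with respect to a static program. -/
def PA.SEquiv {α Q E : Type*} (P : SProg α E) (π π' : PA Q E) : Prop :=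
  ∀ st ∈ P.traces, PA.SSat P st π ↔ PA.SSat P st π'

/-- A transition of a DATE: source state, event, condition, action, target state. -/
structure DTrans (Q : Type*) (E : Type*) (Θ : Type*) where
  src : Q
  ev : E
  cond : Θ → Bool
  act : Θ → Θ
  tgt : Q

/-- A DATE (without timers/channels): states `Q`, events `E`, monitoring
variable states `Θ`, initial state, initial monitoring state, bad states,
and a transition relation. -/
structure DATE (Q : Type*) (E : Type*) (Θ : Type*) where
  init : Q
  th0 : Θ
  bad : Set Q
  delta : Set (DTrans Q E Θ)

namespace DATE

variable {Q E Θ : Type*}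

/-- Determinism: from each state, any two distinct transitions with the same
event have conditions that are never simultaneously true. -/
def Deterministic (D : DATE Q E Θ) : Prop :=
  ∀ d ∈ D.delta, ∀ d' ∈ D.delta,
    d.src = d'.src → d.ev = d'.ev → d ≠ d' →
      ∀ θ : Θ, ¬(d.cond θ = true ∧ d'.cond θ = true)

/-- The concrete transition function `Δ`. -/
noncomputable def step (D : DATE Q E Θ) (s : Q × Θ) (e : E) : Q × Θ :=
  if h : ∃ d ∈ D.delta, d.src = s.1 ∧ d.ev = e ∧ d.cond s.2 = true
  then (h.choose.tgt, h.choose.act s.2)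
  else s

/-- `Δ*`: iterated concrete transition function along a ground trace. -/
noncomputable def run (D : DATE Q E Θ) (s : Q × Θ) (t : List E) : Q × Θ :=
  t.foldl D.step s

/-- A ground trace satisfies a DATE iff no prefix of it drives `Δ*` from the
initial configuration into a bad state. -/
def Sat (t : List E) (D : DATE Q E Θ) : Prop :=
  ∀ t' : List E, t' <+: t → (D.run (D.init, D.th0) t').1 ∉ D.bad

/-- Equivalence of two DATEs with respect to a set of ground traces. -/
def EquivOn (T : Set (List E)) (D D' : DATE Q E Θ) : Prop :=
  ∀ t ∈ T, Sat t D ↔ Sat t D'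

/-- The static transition relation `q →e_approx q'`. -/
def ApproxStep (D : DATE Q E Θ) (q : Q) (e : E) (q' : Q) : Prop :=
  (∃ d ∈ D.delta, d.src = q ∧ d.ev = e ∧ d.tgt = q' ∧ ¬ ∀ θ : Θ, d.cond θ = false)
  ∨ (q' = q ∧ ¬ ∃ d ∈ D.delta, d.src = q ∧ d.ev = e ∧ d.tgt ≠ q ∧ ∀ θ : Θ, d.cond θ = true)

/-- The static transition function on sets of states. -/
def approxSet (D : DATE Q E Θ) (S : Set Q) (e : E) : Set Q :=
  {q' | ∃ q ∈ S, D.ApproxStep q e q'}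

/-- `approxΔ*`: iterated static transition function along a ground trace. -/
def approxRun (D : DATE Q E Θ) (S : Set Q) (t : List E) : Set Q :=
  t.foldl D.approxSet S

/-- `q ↪ q'`: `q'` is reachable from `q` via the static transition relation. -/
def Reach (D : DATE Q E Θ) (q q' : Q) : Prop :=
  ∃ t : List E, q' ∈ D.approxRun {q} t

/-- `badAfter(q)`: `q` is reachable from the initial state and can reach a bad state. -/
def BadAfter (D : DATE Q E Θ) (q : Q) : Prop :=
  D.Reach D.init q ∧ ∃ q' ∈ D.bad, D.Reach q q'

/-- `goodEntryPoint(q)`. -/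
def GoodEntryPoint (D : DATE Q E Θ) (q : Q) : Prop :=
  ¬ D.BadAfter q ∧ ∃ q' : Q, ∃ e : E, D.BadAfter q' ∧ D.ApproxStep q' e q

/-- `useful(q)`. -/
def Useful (D : DATE Q E Θ) (q : Q) : Prop :=
  D.BadAfter q ∨ D.GoodEntryPoint q

/-- Restriction of a DATE to a set of transitions (`D ↾ δ'`). -/
def restrict (D : DATE Q E Θ) (δ' : Set (DTrans Q E Θ)) : DATE Q E Θ :=
  { D with delta := D.delta ∩ δ' }

/-- The reachability-reduced DATE `reach(D)`: only useful states and
transitions between useful states are kept. -/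
def reachReduce (D : DATE Q E Θ) : DATE Q E Θ :=
  D.restrict {d | D.Useful d.src ∧ D.Useful d.tgt}

/-- Alphabet restriction `D ↾ Σ'`. -/
def alphaRestrict (D : DATE Q E Θ) (A : Set E) : DATE Q E Θ :=
  D.restrict {d | d.ev ∈ A}

/-- `Σ(T)`: the set of events occurring in some trace of `T`. -/
def eventsOf (T : Set (List E)) : Set E :=
  {e | ∃ t ∈ T, e ∈ t}

/-- Component-wise union of two DATEs (sharing initial state and initial
monitoring state). -/
def union (D₁ D₂ : DATE Q E Θ) : DATE Q E Θ :=
  { init := D₁.init, th0 := D₁.th0, bad := D₁.bad ∪ D₂.bad,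
    delta := D₁.delta ∪ D₂.delta }

/-- Component-wise union of a family of DATEs, with given initial state and
initial monitoring state. -/
def unionFamily {ι : Type*} (q0 : Q) (θ0 : Θ) (f : ι → DATE Q E Θ) : DATE Q E Θ :=
  { init := q0, th0 := θ0, bad := ⋃ i, (f i).bad, delta := ⋃ i, (f i).delta }

/-- A ground trace `t` uses a transition `d`. -/
def Uses (D : DATE Q E Θ) (t : List E) (d : DTrans Q E Θ) : Prop :=
  (¬ ∀ θ : Θ, d.cond θ = false) ∧
    ∃ t' : List E, (t' ++ [d.ev]) <+: t ∧ d.src ∈ D.approxRun {D.init} t'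

/-- Satisfaction of a DATE by a static parametrised trace. -/
def SSat {α : Type*} (P : SProg α E) (st : List (α × E)) (D : DATE Q E Θ) : Prop :=
  ∀ x : α, ∀ t ∈ P.proj x st, Sat t D

/-- Equivalence of two DATEs with respect to a static program. -/
def SEquiv {α : Type*} (P : SProg α E) (D D' : DATE Q E Θ) : Prop :=
  ∀ st ∈ P.traces, SSat P st D ↔ SSat P st D'

end DATE

/-- Translation of a property automaton into a DATE with `Θ = Unit`:
each transition `(q, e, q')` becomes `q —e|true↦skip→ q'`. -/
def PA.toDATE {Q E : Type*} (π : PA Q E) : DATE Q E Unit :=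
  { init := π.init, th0 := (), bad := π.bad,
    delta := {d | d.cond = (fun _ => true) ∧ d.act = id ∧ d.tgt = π.next d.src d.ev} }

/-- The flow-sensitive residual `residual₂(D, P)`. -/
def DATE.residual2 {α Q E Θ : Type*} (D : DATE Q E Θ) (P : SProg α E) : DATE Q E Θ :=
  (D.restrict {d | ∃ t ∈ P.projAll, D.Uses t d}).reachReduce

/-- Consecutive application of the flow-sensitive residual over a list of
static program over-approximations. -/
def DATE.residual2List {α Q E Θ : Type*} (D : DATE Q E Θ) :
    List (SProg α E) → DATE Q E Θ
  | [] => D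
  | P :: Ps => DATE.residual2List (D.residual2 P) Ps

/-! A concrete step either fires an enabled transition, whose condition is then not identically
false, or stays put because no transition is enabled, in which case no transition with condition
`true` leaves the state. Either way it is a static step, and induction along the trace does the
rest. -/

namespace DATE

variable {Q E Θ : Type*}

theorem approxStep_step_fst (D : DATE Q E Θ) (s : Q × Θ) (e : E) :
    D.ApproxStep s.1 e (D.step s e).1 := by
  unfold step
  split_ifs with h
  · obtain ⟨hd, hsrc, hev, hcond⟩ := h.choose_spec
    exact Or.inl ⟨h.choose, hd, hsrc, hev, rfl, fun hfalse => by simp [hfalse s.2] at hcond⟩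
  · exact Or.inr ⟨rfl, fun ⟨d, hd, hsrc, hev, _, htrue⟩ => h ⟨d, hd, hsrc, hev, htrue s.2⟩⟩

theorem run_fst_mem_approxRun (D : DATE Q E Θ) (t : List E) {S : Set Q} {s : Q × Θ}
    (hs : s.1 ∈ S) : (D.run s t).1 ∈ D.approxRun S t := by
  induction t generalizing S s with
  | nil => exact hs
  | cons e t ih => exact ih ⟨s.1, hs, D.approxStep_step_fst s e⟩

end DATE

theorem approxRun_overapproximates_run_general {Q E Θ : Type*} (D : DATE Q E Θ) :
    ∀ (θ : Θ) (t : List E) (q : Q), ∀ (q' : Q) (θ' : Θ),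
      D.run (q, θ) t = (q', θ') → q' ∈ D.approxRun {q} t := by
  intro θ t q q' θ' hrun
  have hmem := D.run_fst_mem_approxRun t (S := {q}) (s := (q, θ)) rfl
  rwa [hrun] at hmem

/-- The static transition function of a DATE over-approximates
the concrete transition function. -/
theorem approxRun_overapproximates_run {Q E Θ : Type*} (D : DATE Q E Θ)
    (hdet : D.Deterministic) :
    ∀ (θ : Θ) (t : List E) (q : Q), ∀ (q' : Q) (θ' : Θ),
      D.run (q, θ) t = (q', θ') → q' ∈ D.approxRun {q} t :=
  approxRun_overapproximates_run_general D
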